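/- arXiv:2208.11297 — 5 statements merged into one kernel-verified Lean document; each statement's English description precedes it below -/
import Mathlib

section
/- (Law of large numbers for finite free multiplicative convolution.) Let p be a monic polynomial of degree d with only nonnegative real roots, with root multiset Λ, and let k be the number of zeros in Λ. For each n ≥ 1 let λ_1^(n) ≥ λ_2^(n) ≥ ... ≥ λ_d^(n) be the nonnegative real roots of p^{⊠_d n}. Then for every 1 ≤ i ≤ d−k, the sequence (λ_i^(n))^{1/n} converges to ẽ_i(Λ)/ẽ_{i−1}(Λ) as n → ∞, and for every d−k+1 ≤ i ≤ d one has λ_i^(n) = 0 for all n (so (λ_i^(n))^{1/n} → 0). -/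
open Polynomial Filter Topology

/-
The coefficients of `p^{⊠_d n}` are `(-1)^i binom(d,i) ẽ_i(Λ)^n`, so the `i`-th elementary
symmetric function of its roots is `binom(d,i) ẽ_i(Λ)^n`. If the roots are sorted decreasingly,
this `e_i` lies between the product `λ_1 ⋯ λ_i` of the `i` largest roots and `binom(d,i)` times
that product. Hence `λ_i = (λ_1 ⋯ λ_i) / (λ_1 ⋯ λ_{i-1})` is `(ẽ_i / ẽ_{i-1})^n` up to factors
bounded above and below independently of `n`, which disappear under `n`-th roots. When `i`
exceeds the number `d - k` of nonzero elements of `Λ`, `ẽ_i = 0` and `λ_i^i ≤ λ_1 ⋯ λ_i ≤ e_i = 0`.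
-/

/-- Finite free multiplicative convolution of two polynomials of degree `d`:
for `p(x) = Σ (-1)^i p_i x^{d-i}` and `q(x) = Σ (-1)^i q_i x^{d-i}`,
`(p ⊠_d q)(x) = Σ (-1)^i (p_i q_i / binom(d,i)) x^{d-i}`. -/
noncomputable def ffmul (d : ℕ) (p q : Polynomial ℝ) : Polynomial ℝ :=
  ∑ i ∈ Finset.range (d + 1),
    Polynomial.C ((-1 : ℝ) ^ i * p.coeff (d - i) * q.coeff (d - i) / (d.choose i : ℝ)) *
      Polynomial.X ^ (d - i)

/-- `ffmulPow d p n` is the `n`-th finite free multiplicative convolution power `p^{⊠_d n}`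
(for `n ≥ 1`); the convolution identity `(x-1)^d` is used as the 0-th power. -/
noncomputable def ffmulPow (d : ℕ) (p : Polynomial ℝ) : ℕ → Polynomial ℝ
  | 0 => (Polynomial.X - 1) ^ d
  | n + 1 => ffmul d p (ffmulPow d p n)

/-- Normalized elementary symmetric function `ẽ_i(Λ) = e_i(Λ) / binom(d,i)`. -/
noncomputable def etilde (d i : ℕ) (Λ : Multiset ℝ) : ℝ :=
  Λ.esymm i / (d.choose i : ℝ)

namespace Multiset

variable {R : Type*}

theorem card_filter_ne_zero [Zero R] [DecidableEq R] (s : Multiset R) :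
    card (s.filter (· ≠ 0)) = card s - s.count 0 := by
  have hsplit := congrArg card (filter_add_not (· ≠ 0) s)
  have hzeros : card (s.filter fun a => ¬a ≠ 0) = s.count 0 := by
    rw [count_eq_card_filter_eq]
    exact congrArg card (filter_congr fun x _ => by rw [not_not, eq_comm])
  rw [card_add, hzeros] at hsplit
  omega

theorem esymm_eq_zero_of_card_filter_lt [CommSemiring R] [DecidableEq R] {s : Multiset R} {i : ℕ}
    (hi : card (s.filter (· ≠ 0)) < i) : s.esymm i = 0 := by
  refine sum_eq_zero fun x hx => ?_
  obtain ⟨t, ht, rfl⟩ := mem_map.mp hx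
  obtain ⟨hts, htc⟩ := mem_powersetCard.mp ht
  refine prod_eq_zero (not_not.mp fun h0 => hi.not_ge ?_)
  rw [← htc]
  exact card_le_card (le_filter.mpr ⟨hts, fun a ha h => h0 (h ▸ ha)⟩)

theorem esymm_pos_of_le_card_filter [CommSemiring R] [PartialOrder R] [IsStrictOrderedRing R]
    [DecidableEq R] {s : Multiset R} (hs : ∀ x ∈ s, 0 ≤ x) {i : ℕ}
    (hi : i ≤ card (s.filter (· ≠ 0))) : 0 < s.esymm i := by
  obtain ⟨t, ht⟩ : ∃ t, t ∈ powersetCard i (s.filter (· ≠ 0)) :=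
    card_pos_iff_exists_mem.mp (by rw [card_powersetCard]; exact Nat.choose_pos hi)
  obtain ⟨htF, htc⟩ := mem_powersetCard.mp ht
  have hts : t ≤ s := htF.trans (filter_le _ _)
  have hpos : 0 < t.prod := prod_pos fun x hx =>
    (hs x (mem_of_le hts hx)).lt_of_ne (of_mem_filter (mem_of_le htF hx)).symm
  refine hpos.trans_le (single_le_sum (fun y hy => ?_) _
    (mem_map_of_mem _ (mem_powersetCard.mpr ⟨hts, htc⟩)))
  obtain ⟨u, hu, rfl⟩ := mem_map.mp hy
  exact prod_nonneg fun x hx => hs x (mem_of_le (mem_powersetCard.mp hu).1 hx)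

theorem coeff_prod_X_sub_C [CommRing R] (s : Multiset R) {j : ℕ} (hj : j ≤ card s) :
    (s.map fun r => X - C r).prod.coeff (card s - j) = (-1) ^ j * s.esymm j := by
  rw [prod_X_sub_C_coeff s (Nat.sub_le _ _), Nat.sub_sub_self hj]

end Multiset

theorem coeff_ffmul (d : ℕ) (p q : ℝ[X]) {j : ℕ} (hj : j ≤ d) :
    (ffmul d p q).coeff (d - j) = (-1) ^ j * p.coeff (d - j) * q.coeff (d - j) / d.choose j := by
  rw [ffmul, finsetSum_coeff, Finset.sum_eq_single_of_mem j (Finset.mem_range.mpr (by omega))]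
  · rw [coeff_C_mul_X_pow, if_pos rfl]
  · intro i hi hij
    rw [coeff_C_mul_X_pow, if_neg (by rw [Finset.mem_range] at hi; omega)]

theorem coeff_ffmulPow {d : ℕ} {Λ : Multiset ℝ} (hcard : Multiset.card Λ = d) (n : ℕ)
    {j : ℕ} (hj : j ≤ d) :
    (ffmulPow d (Λ.map fun r => X - C r).prod n).coeff (d - j)
      = (-1) ^ j * d.choose j * etilde d j Λ ^ n := by
  have hchoose : (d.choose j : ℝ) ≠ 0 := by exact_mod_cast (Nat.choose_pos hj).ne'
  induction n with
  | zero =>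
    rw [ffmulPow, sub_eq_add_neg, ← C_1, ← C_neg, coeff_X_add_C_pow, Nat.sub_sub_self hj,
      Nat.choose_symm hj, pow_zero, mul_one]
  | succ n ih =>
    have hsign : (-1 : ℝ) ^ j * (-1) ^ j = 1 := by rw [← mul_pow]; norm_num
    have hesymm : Λ.esymm j = d.choose j * etilde d j Λ := by rw [etilde]; field_simp
    rw [ffmulPow, coeff_ffmul d _ _ hj, ih, ← hcard, Multiset.coeff_prod_X_sub_C Λ (hcard ▸ hj),
      hcard, hesymm, div_eq_iff hchoose]
    linear_combination ((-1) ^ j * d.choose j ^ 2 * etilde d j Λ ^ (n + 1) : ℝ) * hsign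

theorem esymm_eq_of_ffmulPow_eq {d n : ℕ} {Λ s : Multiset ℝ} (hΛ : Multiset.card Λ = d)
    (hs : Multiset.card s = d)
    (h : ffmulPow d (Λ.map fun r => X - C r).prod n = (s.map fun r => X - C r).prod)
    {j : ℕ} (hj : j ≤ d) :
    s.esymm j = d.choose j * etilde d j Λ ^ n := by
  have hcoeff := coeff_ffmulPow hΛ n hj
  rw [h, ← hs, Multiset.coeff_prod_X_sub_C s (hs ▸ hj), hs, mul_assoc] at hcoeff
  exact mul_left_cancel₀ (pow_ne_zero j (neg_ne_zero.mpr one_ne_zero)) hcoeff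

theorem etilde_pos {d i : ℕ} {Λ : Multiset ℝ} (hcard : Multiset.card Λ = d)
    (hnonneg : ∀ x ∈ Λ, 0 ≤ x) (hi : i ≤ d - Λ.count 0) : 0 < etilde d i Λ := by
  refine div_pos (Multiset.esymm_pos_of_le_card_filter hnonneg ?_)
    (by exact_mod_cast Nat.choose_pos (hi.trans (Nat.sub_le d _)))
  rwa [Multiset.card_filter_ne_zero, hcard]

theorem etilde_eq_zero {d i : ℕ} {Λ : Multiset ℝ} (hcard : Multiset.card Λ = d)
    (hi : d - Λ.count 0 < i) : etilde d i Λ = 0 := by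
  have hcard_filter : Multiset.card (Λ.filter (· ≠ 0)) < i := by
    rwa [Multiset.card_filter_ne_zero, hcard]
  rw [etilde, Multiset.esymm_eq_zero_of_card_filter_lt hcard_filter, zero_div]

open Finset

section OrderedProducts

variable {R : Type*} [CommSemiring R] [LinearOrder R] [IsStrictOrderedRing R]

theorem Finset.prod_le_prod_of_card_eq {ι : Type*} {s t : Finset ι} {f : ι → R}
    (hcard : #s = #t) (h0 : ∀ x ∈ s, 0 ≤ f x) (hle : ∀ x ∈ s, ∀ y ∈ t, f x ≤ f y) :
    ∏ x ∈ s, f x ≤ ∏ y ∈ t, f y := by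
  rcases s.eq_empty_or_nonempty with rfl | ⟨x₀, hx₀⟩
  · rw [card_empty, eq_comm, card_eq_zero] at hcard
    rw [hcard]
  obtain ⟨y₀, hy₀, hmin⟩ := t.exists_min_image f (card_pos.mp (hcard ▸ card_pos.mpr ⟨x₀, hx₀⟩))
  have hy₀_nonneg : 0 ≤ f y₀ := (h0 x₀ hx₀).trans (hle x₀ hx₀ y₀ hy₀)
  calc ∏ x ∈ s, f x ≤ ∏ _x ∈ s, f y₀ := prod_le_prod h0 fun x hx => hle x hx y₀ hy₀
    _ = ∏ _y ∈ t, f y₀ := by rw [prod_const, prod_const, hcard]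
    _ ≤ ∏ y ∈ t, f y := prod_le_prod (fun _ _ => hy₀_nonneg) hmin

variable {f : ℕ → R} {d : ℕ}

theorem prod_le_prod_Icc_one_of_subset (hf0 : ∀ i ∈ Set.Icc 1 d, 0 ≤ f i)
    (hf : AntitoneOn f (Set.Icc 1 d)) {A : Finset ℕ} (hA : A ⊆ Icc 1 d) :
    ∏ a ∈ A, f a ≤ ∏ a ∈ Icc 1 #A, f a := by
  set I := Icc 1 #A
  have hAd : #A ≤ d := by simpa using card_le_card hA
  have hsdiff : ∏ a ∈ A \ I, f a ≤ ∏ a ∈ I \ A, f a := by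
    refine prod_le_prod_of_card_eq (card_sdiff_comm (by simp [I]))
      (fun x hx => hf0 x (by simpa using hA (sdiff_subset hx))) fun x hx y hy => ?_
    have hx' := mem_Icc.mp (hA (mem_sdiff.mp hx).1)
    have hxI : #A < x := by
      by_contra h
      exact (mem_sdiff.mp hx).2 (mem_Icc.mpr ⟨hx'.1, by omega⟩)
    have hy' := mem_Icc.mp (mem_sdiff.mp hy).1
    exact hf ⟨hy'.1, by omega⟩ hx' (by omega)
  rw [← prod_inter_mul_prod_sdiff A I, ← prod_inter_mul_prod_sdiff I A, inter_comm I A]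
  exact mul_le_mul_of_nonneg_left hsdiff
    (prod_nonneg fun x hx => hf0 x (by simpa using hA (mem_inter.mp hx).1))

theorem prod_Icc_one_le_esymm (hf0 : ∀ i ∈ Set.Icc 1 d, 0 ≤ f i) {i : ℕ} (hi : i ≤ d) :
    ∏ a ∈ Icc 1 i, f a ≤ ((Icc 1 d).val.map f).esymm i := by
  rw [esymm_map_val]
  refine single_le_sum (f := fun A => ∏ a ∈ A, f a) (fun A hA => prod_nonneg fun a ha => ?_)
    (mem_powersetCard.mpr ⟨Icc_subset_Icc_right hi, by simp⟩)
  exact hf0 a (by simpa using (mem_powersetCard.mp hA).1 ha)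

theorem esymm_le_choose_mul_prod_Icc_one (hf0 : ∀ i ∈ Set.Icc 1 d, 0 ≤ f i)
    (hf : AntitoneOn f (Set.Icc 1 d)) (i : ℕ) :
    ((Icc 1 d).val.map f).esymm i ≤ d.choose i * ∏ a ∈ Icc 1 i, f a := by
  calc ((Icc 1 d).val.map f).esymm i
      = ∑ A ∈ (Icc 1 d).powersetCard i, ∏ a ∈ A, f a := esymm_map_val f _ i
    _ ≤ ∑ _A ∈ (Icc 1 d).powersetCard i, ∏ a ∈ Icc 1 i, f a := sum_le_sum fun A hA => by
        obtain ⟨hAd, rfl⟩ := mem_powersetCard.mp hA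
        exact prod_le_prod_Icc_one_of_subset hf0 hf hAd
    _ = d.choose i * ∏ a ∈ Icc 1 i, f a := by simp [nsmul_eq_mul]

theorem pow_le_prod_Icc_one (hf0 : ∀ i ∈ Set.Icc 1 d, 0 ≤ f i)
    (hf : AntitoneOn f (Set.Icc 1 d)) {i : ℕ} (hi : i ≤ d) :
    f i ^ i ≤ ∏ a ∈ Icc 1 i, f a := by
  rcases Nat.eq_zero_or_pos i with rfl | hi₁
  · simp
  have hi_mem : i ∈ Set.Icc 1 d := ⟨hi₁, hi⟩
  calc f i ^ i = ∏ _a ∈ Icc 1 i, f i := by simp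
    _ ≤ ∏ a ∈ Icc 1 i, f a := prod_le_prod (fun _ _ => hf0 i hi_mem) fun a ha => by
        have ha' := mem_Icc.mp ha
        exact hf ⟨ha'.1, by omega⟩ hi_mem ha'.2

theorem apply_eq_zero_of_esymm_eq_zero (hf0 : ∀ i ∈ Set.Icc 1 d, 0 ≤ f i)
    (hf : AntitoneOn f (Set.Icc 1 d)) {i : ℕ} (hi₁ : 1 ≤ i) (hi : i ≤ d)
    (hzero : ((Icc 1 d).val.map f).esymm i = 0) : f i = 0 := by
  have hpow : f i ^ i ≤ 0 :=
    hzero ▸ (pow_le_prod_Icc_one hf0 hf hi).trans (prod_Icc_one_le_esymm hf0 hi)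
  by_contra hne
  exact (pow_pos ((hf0 i ⟨hi₁, hi⟩).lt_of_ne' hne) i).not_ge hpow

end OrderedProducts

theorem apply_mem_Icc_of_esymm_eq {R : Type*} [Field R] [LinearOrder R] [IsStrictOrderedRing R]
    {f : ℕ → R} {d i : ℕ} (hf0 : ∀ i ∈ Set.Icc 1 d, 0 ≤ f i) (hf : AntitoneOn f (Set.Icc 1 d))
    (hi₁ : 1 ≤ i) (hi : i ≤ d) {a b : R} (ha : 0 < a)
    (hprev : ((Icc 1 d).val.map f).esymm (i - 1) = d.choose (i - 1) * a)
    (hcur : ((Icc 1 d).val.map f).esymm i = d.choose i * b) :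
    f i ∈ Set.Icc ((d.choose (i - 1) : R)⁻¹ * (b / a)) (d.choose i * (b / a)) := by
  obtain ⟨j, rfl⟩ := Nat.exists_eq_add_of_le' hi₁
  rw [Nat.add_sub_cancel] at hprev ⊢
  set T : ℕ → R := fun j => ∏ a ∈ Icc 1 j, f a
  have hsplit : T (j + 1) = T j * f (j + 1) := prod_Icc_succ_top (by omega) f
  have hT_nonneg : 0 ≤ T (j + 1) := prod_nonneg fun x hx => hf0 x (by simp at hx ⊢; omega)
  have hTj_lower : a ≤ T j := le_of_mul_le_mul_left
    (hprev ▸ esymm_le_choose_mul_prod_Icc_one hf0 hf j)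
    (by exact_mod_cast Nat.choose_pos (by omega))
  have hTj_upper : T j ≤ d.choose j * a := hprev ▸ prod_Icc_one_le_esymm hf0 (by omega)
  have hTsucc_lower : b ≤ T (j + 1) := le_of_mul_le_mul_left
    (hcur ▸ esymm_le_choose_mul_prod_Icc_one hf0 hf (j + 1)) (by exact_mod_cast Nat.choose_pos hi)
  have hTsucc_upper : T (j + 1) ≤ d.choose (j + 1) * b := hcur ▸ prod_Icc_one_le_esymm hf0 hi
  have hTj_pos : 0 < T j := ha.trans_le hTj_lower
  have hfi : f (j + 1) = T (j + 1) / T j := by rw [hsplit, mul_div_cancel_left₀ _ hTj_pos.ne']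
  rw [hfi, inv_mul_eq_div, div_div, mul_comm a, ← mul_div_assoc]
  exact ⟨div_le_div₀ hT_nonneg hTsucc_lower hTj_pos hTj_upper,
    div_le_div₀ (hT_nonneg.trans hTsucc_upper) hTsucc_upper ha hTj_lower⟩

theorem tendsto_rpow_one_div_of_le_of_le {u : ℕ → ℝ} {L c₁ c₂ : ℝ} (hL : 0 ≤ L)
    (hc₁ : 0 < c₁) (hc₂ : 0 < c₂) (hu : ∀ᶠ n in atTop, u n ∈ Set.Icc (c₁ * L ^ n) (c₂ * L ^ n)) :
    Tendsto (fun n : ℕ => u n ^ (1 / (n : ℝ))) atTop (𝓝 L) := by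
  have hlim : ∀ c : ℝ, 0 < c → Tendsto (fun n : ℕ => (c * L ^ n) ^ (1 / (n : ℝ))) atTop (𝓝 L) := by
    intro c hc
    have hroot : Tendsto (fun n : ℕ => c ^ (1 / (n : ℝ))) atTop (𝓝 1) := by
      simpa [Function.comp_def] using ((Real.continuousAt_const_rpow hc.ne').tendsto).comp
        tendsto_one_div_atTop_nhds_zero_nat
    refine (one_mul L ▸ hroot.mul_const L).congr' ?_
    filter_upwards [eventually_ne_atTop 0] with n hn
    rw [Real.mul_rpow hc.le (by positivity), ← Real.rpow_natCast, ← Real.rpow_mul hL,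
      mul_one_div_cancel (by exact_mod_cast hn), Real.rpow_one]
  refine tendsto_of_tendsto_of_tendsto_of_le_of_le' (hlim c₁ hc₁) (hlim c₂ hc₂) ?_ ?_ <;>
    filter_upwards [hu] with n hn
  · exact Real.rpow_le_rpow (by positivity) hn.1 (by positivity)
  · exact Real.rpow_le_rpow ((by positivity : 0 ≤ c₁ * L ^ n).trans hn.1) hn.2 (by positivity)

/-- LLN for finite free multiplicative convolution. -/
theorem lln_ffmulPow (d k : ℕ) (p : Polynomial ℝ) (Λ : Multiset ℝ) (lam : ℕ → ℕ → ℝ)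
    (hcard : Multiset.card Λ = d) (hnonneg : ∀ x ∈ Λ, (0 : ℝ) ≤ x)
    (hp : p = (Λ.map fun r => Polynomial.X - Polynomial.C r).prod)
    (hk : Λ.count 0 = k)
    (hroots : ∀ n, 1 ≤ n → ffmulPow d p n
        = ∏ i ∈ Finset.Icc 1 d, (Polynomial.X - Polynomial.C (lam n i)))
    (hmono : ∀ n, 1 ≤ n → ∀ i j, 1 ≤ i → i ≤ j → j ≤ d → lam n j ≤ lam n i)
    (hnneg : ∀ n, 1 ≤ n → ∀ i, 1 ≤ i → i ≤ d → 0 ≤ lam n i) :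
    (∀ i, 1 ≤ i → i ≤ d - k →
      Filter.Tendsto (fun n : ℕ => (lam n i) ^ (1 / (n : ℝ))) Filter.atTop
        (nhds (etilde d i Λ / etilde d (i - 1) Λ))) ∧
    (∀ i, d - k + 1 ≤ i → i ≤ d → ∀ n, 1 ≤ n → lam n i = 0) ∧
    (∀ i, d - k + 1 ≤ i → i ≤ d →
      Filter.Tendsto (fun n : ℕ => (lam n i) ^ (1 / (n : ℝ))) Filter.atTop (nhds 0)) := by
  subst hp hk
  have hf0 : ∀ n, 1 ≤ n → ∀ i ∈ Set.Icc 1 d, 0 ≤ lam n i := fun n hn i hi => hnneg n hn i hi.1 hi.2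
  have hf : ∀ n, 1 ≤ n → AntitoneOn (lam n) (Set.Icc 1 d) :=
    fun n hn a ha b hb hab => hmono n hn a b ha.1 hab hb.2
  have hesymm : ∀ n, 1 ≤ n → ∀ j ≤ d,
      ((Finset.Icc 1 d).val.map (lam n)).esymm j = d.choose j * etilde d j Λ ^ n := by
    refine fun n hn j hj => esymm_eq_of_ffmulPow_eq hcard (by simp) ?_ hj
    rw [hroots n hn, Multiset.map_map]
    exact (Finset.prod_map_val _ _).symm
  have hzero : ∀ i, d - Λ.count 0 + 1 ≤ i → i ≤ d → ∀ n, 1 ≤ n → lam n i = 0 := by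
    intro i hi₁ hi n hn
    refine apply_eq_zero_of_esymm_eq_zero (hf0 n hn) (hf n hn) (by omega) hi ?_
    rw [hesymm n hn i hi, etilde_eq_zero hcard (by omega), zero_pow (by omega), mul_zero]
  refine ⟨fun i hi₁ hi => ?_, hzero, fun i hi₁ hi => ?_⟩
  · have hprev := etilde_pos hcard hnonneg (i := i - 1) (by omega)
    refine tendsto_rpow_one_div_of_le_of_le (c₁ := (d.choose (i - 1) : ℝ)⁻¹) (c₂ := d.choose i)
      (div_pos (etilde_pos hcard hnonneg hi) hprev).le
      (inv_pos.mpr (by exact_mod_cast Nat.choose_pos (by omega)))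
      (by exact_mod_cast Nat.choose_pos (by omega)) ?_
    filter_upwards [eventually_ge_atTop 1] with n hn
    rw [div_pow]
    exact apply_mem_Icc_of_esymm_eq (hf0 n hn) (hf n hn) hi₁ (by omega) (pow_pos hprev n)
      (hesymm n hn (i - 1) (by omega)) (hesymm n hn i (by omega))
  · refine tendsto_const_nhds.congr' ?_
    filter_upwards [eventually_ge_atTop 1] with n hn
    rw [hzero i hi₁ hi n hn, Real.zero_rpow (by positivity)]
end

section
/- Let λ_1 ≥ λ_2 ≥ ... ≥ λ_d ≥ 0 be nonnegative real numbers with multiset Λ, and let 1 ≤ i ≤ d be such that e_{i−1}(Λ) > 0 (equivalently λ_{i−1} > 0, where λ_0 is interpreted as positive). Then binom(d,i)^{-1} · e_i(Λ)/e_{i−1}(Λ) ≤ λ_i ≤ binom(d,i−1) · e_i(Λ)/e_{i−1}(Λ). -/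
/-- for ordered nonnegative reals `λ_1 ≥ ... ≥ λ_d` with `e_{i-1}(Λ) > 0`,
`binom(d,i)⁻¹ e_i/e_{i-1} ≤ λ_i ≤ binom(d,i-1) e_i/e_{i-1}`. -/
theorem lambda_between_esymm_ratio (d i : ℕ) (lam : ℕ → ℝ) (Λ : Multiset ℝ)
    (hΛ : Λ = (Finset.Icc 1 d).val.map lam)
    (hmono : ∀ a b, 1 ≤ a → a ≤ b → b ≤ d → lam b ≤ lam a)
    (hnonneg : ∀ a, 1 ≤ a → a ≤ d → 0 ≤ lam a)
    (hi : 1 ≤ i) (hid : i ≤ d)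
    (hpos : 0 < Λ.esymm (i - 1)) :
    (d.choose i : ℝ)⁻¹ * (Λ.esymm i / Λ.esymm (i - 1)) ≤ lam i ∧
      lam i ≤ (d.choose (i - 1) : ℝ) * (Λ.esymm i / Λ.esymm (i - 1)) := by
  subst hΛ
  set s := Finset.Icc 1 d with hs
  have hcard_s : s.card = d := by simp [hs]
  rw [Finset.esymm_map_val] at hpos ⊢
  rw [Finset.esymm_map_val]
  set E1 := (s.powersetCard (i - 1)).sum fun t => t.prod lam with hE1
  set Ei := (s.powersetCard i).sum fun t => t.prod lam with hEi
  have hmem : ∀ a ∈ s, 1 ≤ a ∧ a ≤ d := by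
    intro a ha; exact Finset.mem_Icc.mp ha
  have hterm_nonneg : ∀ k, ∀ T ∈ s.powersetCard k, (0:ℝ) ≤ T.prod lam := by
    intro k T hT
    obtain ⟨hTs, _⟩ := Finset.mem_powersetCard.mp hT
    exact Finset.prod_nonneg fun a ha => hnonneg a (hmem a (hTs ha)).1 (hmem a (hTs ha)).2
  have hlami : 0 ≤ lam i := hnonneg i hi hid
  have hE1nonneg : (0:ℝ) ≤ E1 := le_of_lt hpos
  -- Key bound 1: Ei ≤ choose d i * (lam i * E1)
  have key1 : Ei ≤ (d.choose i : ℝ) * (lam i * E1) := by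
    have hbound : ∀ S ∈ s.powersetCard i, S.prod lam ≤ lam i * E1 := by
      intro S hS
      obtain ⟨hSs, hScard⟩ := Finset.mem_powersetCard.mp hS
      -- there is j ∈ S with i ≤ j
      have hSne : S.Nonempty := Finset.card_pos.mp (by omega)
      have : ∃ j ∈ S, i ≤ j := by
        by_contra h
        push_neg at h
        have hsub : S ⊆ Finset.Ico 1 i := by
          intro a ha
          have := hmem a (hSs ha)
          exact Finset.mem_Ico.mpr ⟨this.1, h a ha⟩
        have := Finset.card_le_card hsub
        simp [Nat.card_Ico] at this
        omega
      obtain ⟨j, hjS, hij⟩ := this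
      have hjd := (hmem j (hSs hjS)).2
      have hprod : S.prod lam = lam j * (S.erase j).prod lam :=
        (Finset.mul_prod_erase S lam hjS).symm
      have herase : S.erase j ∈ s.powersetCard (i - 1) := by
        rw [Finset.mem_powersetCard]
        exact ⟨(Finset.erase_subset j S).trans hSs, by rw [Finset.card_erase_of_mem hjS, hScard]⟩
      have herase_nonneg : (0:ℝ) ≤ (S.erase j).prod lam := hterm_nonneg _ _ herase
      have h1 : (S.erase j).prod lam ≤ E1 :=
        Finset.single_le_sum (fun T hT => hterm_nonneg _ T hT) herase
      have h2 : lam j ≤ lam i := hmono i j hi hij hjd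
      calc S.prod lam = lam j * (S.erase j).prod lam := hprod
        _ ≤ lam i * E1 := mul_le_mul h2 h1 herase_nonneg hlami
    calc Ei ≤ (s.powersetCard i).card • (lam i * E1) := Finset.sum_le_card_nsmul _ _ _ hbound
      _ = (d.choose i : ℝ) * (lam i * E1) := by
          rw [Finset.card_powersetCard, hcard_s, nsmul_eq_mul]
  -- Key bound 2: lam i * E1 ≤ choose d (i-1) * Ei
  have key2 : lam i * E1 ≤ (d.choose (i - 1) : ℝ) * Ei := by
    have hbound : ∀ T ∈ s.powersetCard (i - 1), lam i * T.prod lam ≤ Ei := by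
      intro T hT
      obtain ⟨hTs, hTcard⟩ := Finset.mem_powersetCard.mp hT
      have : ∃ j ∈ Finset.Icc 1 i, j ∉ T := by
        rw [← Finset.not_subset]
        intro h
        have := Finset.card_le_card h
        rw [Nat.card_Icc] at this
        omega
      obtain ⟨j, hjIcc, hjT⟩ := this
      obtain ⟨hj1, hji⟩ := Finset.mem_Icc.mp hjIcc
      have hTnonneg : (0:ℝ) ≤ T.prod lam := hterm_nonneg _ _ hT
      have h2 : lam i ≤ lam j := hmono j i hj1 hji hid
      have hins : insert j T ∈ s.powersetCard i := by
        rw [Finset.mem_powersetCard]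
        constructor
        · intro a ha
          rcases Finset.mem_insert.mp ha with rfl | ha
          · exact Finset.mem_Icc.mpr ⟨hj1, hji.trans hid⟩
          · exact hTs ha
        · rw [Finset.card_insert_of_notMem hjT, hTcard]; omega
      calc lam i * T.prod lam ≤ lam j * T.prod lam := mul_le_mul_of_nonneg_right h2 hTnonneg
        _ = (insert j T).prod lam := (Finset.prod_insert hjT).symm
        _ ≤ Ei := Finset.single_le_sum (fun S hS => hterm_nonneg _ S hS) hins
    calc lam i * E1 = (s.powersetCard (i-1)).sum (fun T => lam i * T.prod lam) := by
          rw [Finset.mul_sum]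
      _ ≤ (s.powersetCard (i-1)).card • Ei := Finset.sum_le_card_nsmul _ _ _ hbound
      _ = (d.choose (i - 1) : ℝ) * Ei := by
          rw [Finset.card_powersetCard, hcard_s, nsmul_eq_mul]
  have hchoose_i : (0:ℝ) < (d.choose i : ℝ) := by
    exact_mod_cast Nat.choose_pos hid
  constructor
  · rw [inv_mul_le_iff₀ hchoose_i, div_le_iff₀ hpos]
    calc Ei ≤ (d.choose i : ℝ) * (lam i * E1) := key1
      _ = (d.choose i : ℝ) * lam i * E1 := by ring
  · rw [mul_div_assoc', le_div_iff₀ hpos]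
    exact key2
end

section
/- (Rate of convergence in the LLN for finite free multiplicative convolution.) Let p be a monic polynomial of degree d with only nonnegative real roots, with root multiset Λ, let k be the number of zeros in Λ, and let 1 ≤ i ≤ d−k. For each n ≥ 1 let λ_i^(n) denote the i-th largest nonnegative real root of p^{⊠_d n}. Then |log((λ_i^(n))^{1/n}) − log(ẽ_i(Λ)/ẽ_{i−1}(Λ))| ≤ max(log binom(d,i−1), log binom(d,i)) / n for all n ≥ 1; in particular log((λ_i^(n))^{1/n}) = log(ẽ_i(Λ)/ẽ_{i−1}(Λ)) + O(1/n) as n → ∞. -/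
open Polynomial Filter

/-!
The normalized coefficient `p_j / binom(d, j)` is multiplicative under `⊠_d`, so the `j`-th
normalized elementary symmetric function of the roots of `p^{⊠_d n}` is `ẽ_j(Λ)^n`. For roots
`λ_1 ≥ ⋯ ≥ λ_d ≥ 0`, `e_j` lies between the largest term `λ_1 ⋯ λ_j` and `binom(d, j)` times
it, so `λ_i = (λ_1 ⋯ λ_i) / (λ_1 ⋯ λ_{i-1})` lies between `(ẽ_i/ẽ_{i-1})^n / binom(d, i-1)` and
`binom(d, i) (ẽ_i/ẽ_{i-1})^n`; taking logarithms and dividing by `n` gives the bound. The ratio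
makes sense because `Λ` has at least `i` nonzero elements, so `ẽ_{i-1}(Λ)` and `ẽ_i(Λ)` are
positive.
-/

section NormalizedCoeff

variable {d j : ℕ}

/-- The coefficient `p_j / binom(d, j)` of `p(x) = Σ (-1)^j p_j x^{d-j}`. -/
noncomputable def normalizedCoeff (d j : ℕ) (p : ℝ[X]) : ℝ :=
  (-1) ^ j * p.coeff (d - j) / d.choose j

theorem ffmul_coeff (p q : ℝ[X]) (hj : j ≤ d) :
    (ffmul d p q).coeff (d - j) = (-1) ^ j * p.coeff (d - j) * q.coeff (d - j) / d.choose j := by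
  rw [ffmul, finsetSum_coeff, Finset.sum_eq_single_of_mem j (Finset.mem_range.mpr (by omega))]
  · simp
  · intro b hb hbj
    have : d - j ≠ d - b := by rw [Finset.mem_range] at hb; omega
    simp [coeff_X_pow, this]

theorem normalizedCoeff_ffmul (p q : ℝ[X]) (hj : j ≤ d) :
    normalizedCoeff d j (ffmul d p q) = normalizedCoeff d j p * normalizedCoeff d j q := by
  simp only [normalizedCoeff, ffmul_coeff p q hj]
  ring

theorem normalizedCoeff_X_sub_one_pow (hj : j ≤ d) : normalizedCoeff d j ((X - 1) ^ d) = 1 := by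
  have hC : (d.choose j : ℝ) ≠ 0 := by exact_mod_cast (Nat.choose_pos hj).ne'
  rw [normalizedCoeff, sub_eq_add_neg, ← C_1, ← C_neg, coeff_X_add_C_pow, Nat.sub_sub_self hj,
    Nat.choose_symm hj, ← mul_assoc, ← pow_add, Even.neg_one_pow ⟨j, rfl⟩, one_mul, div_self hC]

theorem normalizedCoeff_ffmulPow (p : ℝ[X]) (hj : j ≤ d) (n : ℕ) :
    normalizedCoeff d j (ffmulPow d p n) = normalizedCoeff d j p ^ n := by
  induction n with
  | zero => exact normalizedCoeff_X_sub_one_pow hj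
  | succ n ih => rw [ffmulPow, normalizedCoeff_ffmul _ _ hj, ih, pow_succ']

theorem normalizedCoeff_prod_X_sub_C {s : Multiset ℝ} (hs : Multiset.card s = d) (hj : j ≤ d) :
    normalizedCoeff d j (s.map fun r => X - C r).prod = etilde d j s := by
  rw [normalizedCoeff, Multiset.prod_X_sub_C_coeff s (by omega), hs, Nat.sub_sub_self hj,
    ← mul_assoc, ← pow_add, Even.neg_one_pow ⟨j, rfl⟩, one_mul, etilde]

theorem etilde_map_eq_pow_of_ffmulPow_eq {s : Multiset ℝ} (hs : Multiset.card s = d)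
    {f : ℕ → ℝ} {n : ℕ}
    (hroots : ffmulPow d (s.map fun r => X - C r).prod n = ∏ a ∈ Finset.Icc 1 d, (X - C (f a)))
    (hj : j ≤ d) : etilde d j ((Finset.Icc 1 d).val.map f) = etilde d j s ^ n := by
  rw [← normalizedCoeff_prod_X_sub_C (by simp) hj, Multiset.map_map,
    ← Finset.prod_eq_multiset_prod, Function.comp_def, ← hroots,
    normalizedCoeff_ffmulPow _ hj, normalizedCoeff_prod_X_sub_C hs hj]

end NormalizedCoeff

section SortedProducts

variable {R : Type*} [CommSemiring R] [PartialOrder R] [IsOrderedRing R]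
  {f : ℕ → R} {d : ℕ}

theorem Finset.prod_le_prod_Icc_card_of_antitoneOn (hf : AntitoneOn f (Set.Icc 1 d))
    (hf₀ : ∀ a ∈ Finset.Icc 1 d, 0 ≤ f a) {S : Finset ℕ} (hS : S ⊆ Finset.Icc 1 d) :
    ∏ x ∈ S, f x ≤ ∏ x ∈ Finset.Icc 1 S.card, f x := by
  induction S using Finset.induction_on_max with
  | empty => simp
  | insert a S hlt ih =>
    have haS : a ∉ S := fun h => (hlt a h).false
    have hS' : S ⊆ Finset.Icc 1 d := (Finset.subset_insert a S).trans hS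
    have ha : a ∈ Finset.Icc 1 d := hS (Finset.mem_insert_self a S)
    obtain ⟨ha₁, had⟩ := Finset.mem_Icc.mp ha
    have hcard : S.card + 1 ≤ a := by
      have : S ⊆ Finset.Ico 1 a := fun x hx =>
        Finset.mem_Ico.mpr ⟨(Finset.mem_Icc.mp (hS' hx)).1, hlt x hx⟩
      have := Finset.card_le_card this
      simp only [Nat.card_Ico] at this
      omega
    have hprod₀ : 0 ≤ ∏ x ∈ Finset.Icc 1 S.card, f x := Finset.prod_nonneg fun x hx => by
      have := Finset.mem_Icc.mp hx
      exact hf₀ x (Finset.mem_Icc.mpr ⟨this.1, by omega⟩)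
    rw [Finset.prod_insert haS, Finset.card_insert_of_notMem haS,
      Finset.prod_Icc_succ_top (by omega), mul_comm]
    exact mul_le_mul (ih hS') (hf ⟨by omega, by omega⟩ (Finset.mem_Icc.mp ha) hcard)
      (hf₀ a ha) hprod₀

end SortedProducts

theorem Multiset.esymm_pos_of_le_card_sub_count_zero {R : Type*} [CommSemiring R]
    [PartialOrder R] [IsStrictOrderedRing R] [DecidableEq R] {s : Multiset R}
    (hs : ∀ x ∈ s, 0 ≤ x) {j : ℕ}
    (hj : j ≤ Multiset.card s - s.count 0) : 0 < s.esymm j := by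
  have hcard : Multiset.card (s.filter (0 ≠ ·)) = Multiset.card s - s.count 0 := by
    rw [← Multiset.countP_eq_card_filter, Multiset.card_eq_countP_add_countP (0 = ·) s]
    exact (Nat.add_sub_cancel_left _ _).symm
  obtain ⟨t, ht⟩ : ∃ t, t ∈ (s.filter (0 ≠ ·)).powersetCard j := by
    rw [← Multiset.card_pos_iff_exists_mem, Multiset.card_powersetCard, hcard]
    exact Nat.choose_pos hj
  obtain ⟨hts, -⟩ := Multiset.mem_powersetCard.mp ht
  have htpos : 0 < t.prod := Multiset.prod_pos fun x hx => by
    obtain ⟨hx, hx0⟩ := Multiset.mem_filter.mp (Multiset.mem_of_le hts hx)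
    exact (hs x hx).lt_of_ne hx0
  refine htpos.trans_le (Multiset.single_le_sum (fun y hy => ?_) _ ?_)
  · obtain ⟨u, hu, rfl⟩ := Multiset.mem_map.mp hy
    exact Multiset.prod_nonneg fun x hx =>
      hs x (Multiset.mem_of_le (Multiset.mem_powersetCard.mp hu).1 hx)
  · exact Multiset.mem_map_of_mem _
      (Multiset.mem_of_le (Multiset.powersetCard_mono j (Multiset.filter_le _ _)) ht)

section SortedRoots

variable {f : ℕ → ℝ} {d : ℕ}

theorem etilde_le_prod_Icc (hf : AntitoneOn f (Set.Icc 1 d))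
    (hf₀ : ∀ a ∈ Finset.Icc 1 d, 0 ≤ f a) {j : ℕ} (hj : j ≤ d) :
    etilde d j ((Finset.Icc 1 d).val.map f) ≤ ∏ x ∈ Finset.Icc 1 j, f x := by
  have hsum : ∑ t ∈ (Finset.Icc 1 d).powersetCard j, ∏ x ∈ t, f x
      ≤ ((Finset.Icc 1 d).powersetCard j).card • ∏ x ∈ Finset.Icc 1 j, f x :=
    Finset.sum_le_card_nsmul _ _ _ fun t ht => by
      obtain ⟨htd, rfl⟩ := Finset.mem_powersetCard.mp ht
      exact Finset.prod_le_prod_Icc_card_of_antitoneOn hf hf₀ htd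
  rw [Finset.card_powersetCard, Nat.card_Icc, Nat.add_sub_cancel, nsmul_eq_mul] at hsum
  rw [etilde, Finset.esymm_map_val, div_le_iff₀' (by exact_mod_cast Nat.choose_pos hj)]
  exact hsum

theorem prod_Icc_le_choose_mul_etilde (hf₀ : ∀ a ∈ Finset.Icc 1 d, 0 ≤ f a) {j : ℕ}
    (hj : j ≤ d) :
    ∏ x ∈ Finset.Icc 1 j, f x ≤ d.choose j * etilde d j ((Finset.Icc 1 d).val.map f) := by
  rw [etilde, mul_div_cancel₀ _ (by exact_mod_cast (Nat.choose_pos hj).ne'),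
    Finset.esymm_map_val]
  refine Finset.single_le_sum (f := fun t => ∏ x ∈ t, f x)
    (fun t ht => Finset.prod_nonneg fun x hx =>
      hf₀ x ((Finset.mem_powersetCard.mp ht).1 hx)) ?_
  exact Finset.mem_powersetCard.mpr ⟨Finset.Icc_subset_Icc_right hj, by simp⟩

theorem apply_succ_mem_Icc_etilde_div (hf : AntitoneOn f (Set.Icc 1 d))
    (hf₀ : ∀ a ∈ Finset.Icc 1 d, 0 ≤ f a) {i : ℕ} (hi : i + 1 ≤ d)
    (hpos : 0 < etilde d i ((Finset.Icc 1 d).val.map f)) :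
    f (i + 1) ∈ Set.Icc
      (etilde d (i + 1) ((Finset.Icc 1 d).val.map f) / etilde d i ((Finset.Icc 1 d).val.map f)
        / d.choose i)
      (d.choose (i + 1) * (etilde d (i + 1) ((Finset.Icc 1 d).val.map f)
        / etilde d i ((Finset.Icc 1 d).val.map f))) := by
  set E := fun j => etilde d j ((Finset.Icc 1 d).val.map f)
  set P := fun j => ∏ x ∈ Finset.Icc 1 j, f x
  have hPpos : 0 < P i := hpos.trans_le (etilde_le_prod_Icc hf hf₀ (by omega))
  have hP : f (i + 1) = P (i + 1) / P i := by
    rw [eq_div_iff hPpos.ne', mul_comm]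
    exact (Finset.prod_Icc_succ_top (by omega) f).symm
  have hP₀ : 0 ≤ P (i + 1) := Finset.prod_nonneg fun x hx => hf₀ x
    (Finset.Icc_subset_Icc_right hi hx)
  have hupper := prod_Icc_le_choose_mul_etilde hf₀ hi
  rw [hP, div_div, mul_div_assoc', mul_comm (E i)]
  exact ⟨div_le_div₀ hP₀ (etilde_le_prod_Icc hf hf₀ hi) hPpos
      (prod_Icc_le_choose_mul_etilde hf₀ (by omega)),
    div_le_div₀ (hP₀.trans hupper) hupper hpos (etilde_le_prod_Icc hf hf₀ (by omega))⟩

end SortedRoots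

theorem abs_log_rpow_one_div_sub_log_le {x a c₁ c₂ : ℝ} {n : ℕ} (hn : 0 < n) (ha : 0 < a)
    (hc₁ : 0 < c₁) (hlow : a ^ n / c₁ ≤ x) (hup : x ≤ c₂ * a ^ n) :
    |Real.log (x ^ (1 / (n : ℝ))) - Real.log a| ≤ max (Real.log c₁) (Real.log c₂) / n := by
  have han : 0 < a ^ n := pow_pos ha n
  have hx : 0 < x := (div_pos han hc₁).trans_le hlow
  have hc₂ : 0 < c₂ := pos_of_mul_pos_left (hx.trans_le hup) han.le
  have hlog_low := Real.log_le_log (div_pos han hc₁) hlow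
  have hlog_up := Real.log_le_log hx hup
  rw [Real.log_div han.ne' hc₁.ne', Real.log_pow] at hlog_low
  rw [Real.log_mul hc₂.ne' han.ne', Real.log_pow] at hlog_up
  have hn' : (0 : ℝ) < n := by exact_mod_cast hn
  rw [Real.log_rpow hx, le_div_iff₀ hn', ← abs_of_pos hn', ← abs_mul, abs_of_pos hn', abs_le]
  constructor <;> field_simp <;> grind [le_max_left, le_max_right]

theorem Asymptotics.isBigO_one_div_of_abs_le {u : ℕ → ℝ} {C : ℝ}
    (h : ∀ n : ℕ, 1 ≤ n → |u n| ≤ C / n) : u =O[atTop] fun n : ℕ => 1 / (n : ℝ) := by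
  refine Asymptotics.IsBigO.of_bound C ?_
  filter_upwards [eventually_ge_atTop 1] with n hn
  rw [Real.norm_eq_abs, Real.norm_eq_abs, abs_of_nonneg (a := 1 / (n : ℝ)) (by positivity),
    mul_one_div]
  exact h n hn

open Asymptotics in
/-- rate of convergence in the LLN for `⊠_d`:
`|log((λ_i^(n))^{1/n}) − log(ẽ_i/ẽ_{i-1})| ≤ max(log binom(d,i-1), log binom(d,i))/n`,
in particular the error is `O(1/n)`. -/
theorem lln_rate (d k i : ℕ) (p : Polynomial ℝ) (Λ : Multiset ℝ) (lam : ℕ → ℕ → ℝ)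
    (hcard : Multiset.card Λ = d) (hnonneg : ∀ x ∈ Λ, (0 : ℝ) ≤ x)
    (hp : p = (Λ.map fun r => Polynomial.X - Polynomial.C r).prod)
    (hk : Λ.count 0 = k)
    (hroots : ∀ n, 1 ≤ n → ffmulPow d p n
        = ∏ j ∈ Finset.Icc 1 d, (Polynomial.X - Polynomial.C (lam n j)))
    (hmono : ∀ n, 1 ≤ n → ∀ a b, 1 ≤ a → a ≤ b → b ≤ d → lam n b ≤ lam n a)
    (hnneg : ∀ n, 1 ≤ n → ∀ a, 1 ≤ a → a ≤ d → 0 ≤ lam n a)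
    (hi : 1 ≤ i) (hik : i ≤ d - k) :
    (∀ n : ℕ, 1 ≤ n →
      |Real.log ((lam n i) ^ (1 / (n : ℝ))) - Real.log (etilde d i Λ / etilde d (i - 1) Λ)|
        ≤ max (Real.log (d.choose (i - 1) : ℝ)) (Real.log (d.choose i : ℝ)) / n) ∧
    (fun n : ℕ =>
        Real.log ((lam n i) ^ (1 / (n : ℝ))) - Real.log (etilde d i Λ / etilde d (i - 1) Λ))
      =O[Filter.atTop] fun n : ℕ => 1 / (n : ℝ) := by
  obtain ⟨i, rfl⟩ := Nat.exists_eq_add_of_le' hi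
  simp only [Nat.add_sub_cancel]
  have hid : i + 1 ≤ d := hik.trans (Nat.sub_le d k)
  have hpos : ∀ j ≤ i + 1, 0 < etilde d j Λ := fun j hj =>
    div_pos (Multiset.esymm_pos_of_le_card_sub_count_zero hnonneg (by omega))
      (by exact_mod_cast Nat.choose_pos (by omega))
  refine (fun hbound => ⟨hbound, isBigO_one_div_of_abs_le hbound⟩) fun n hn => ?_
  have hroots_etilde : ∀ j ≤ d,
      etilde d j ((Finset.Icc 1 d).val.map (lam n)) = etilde d j Λ ^ n := fun j hj =>
    etilde_map_eq_pow_of_ffmulPow_eq hcard (hp ▸ hroots n hn) hj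
  have hroot := apply_succ_mem_Icc_etilde_div (f := lam n)
    (fun a ha b hb hab => hmono n hn a b ha.1 hab hb.2)
    (fun a ha => hnneg n hn a (Finset.mem_Icc.mp ha).1 (Finset.mem_Icc.mp ha).2) hid
    (by rw [hroots_etilde i (by omega)]; exact pow_pos (hpos i (by omega)) n)
  rw [hroots_etilde _ hid, hroots_etilde i (by omega), ← div_pow] at hroot
  exact abs_log_rpow_one_div_sub_log_le hn (div_pos (hpos _ le_rfl) (hpos i (by omega)))
    (by exact_mod_cast Nat.choose_pos (by omega)) hroot.1 hroot.2
end

section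
/- (Optimality of the 1/n rate.) Let p(x) := x² − 2x + 1/2. Then for every n ≥ 1, the n-th finite free multiplicative convolution power satisfies p^{⊠_2 n}(x) = x² − 2x + 2^{−n}, whose roots are λ_1^(n) = 1 + √(1 − 2^{−n}) and λ_2^(n) = 1 − √(1 − 2^{−n}). Moreover lim_{n→∞} (λ_1^(n))^{1/n} = 1, lim_{n→∞} (λ_2^(n))^{1/n} = 1/2, and n·(log((λ_1^(n))^{1/n}) − log 1) → log 2 and n·(log((λ_2^(n))^{1/n}) − log(1/2)) → −log 2 as n → ∞; hence the O(1/n) order of convergence is optimal. -/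
open Polynomial Filter

/-!
For `d = 2` the convolution of `x² - s x + a` and `x² - t x + b` is `x² - (s t / 2) x + a b`, so
the powers of `p = x² - 2x + 1/2` are `x² - 2x + 2⁻ⁿ`. Their roots satisfy `λ₁ → 2` and
`λ₂ = 2⁻ⁿ / λ₁`. Each root has the form `cⁿ uₙ` with `uₙ → L > 0` (`c = 1, uₙ = λ₁` and
`c = 1/2, uₙ = 1/λ₁`), and then `log (cⁿ uₙ)^(1/n) = log c + (log uₙ) / n`: the `n`-th root
converges to `c` with error exactly `(log L + o(1)) / n`, and `log L = ± log 2 ≠ 0`.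
-/

open Topology

theorem ffmul_two_quadratic (s t a b : ℝ) :
    ffmul 2 (X ^ 2 - C s * X + C a) (X ^ 2 - C t * X + C b)
      = X ^ 2 - C (s * t / 2) * X + C (a * b) := by
  simp only [ffmul, Finset.sum_range_succ, Finset.sum_range_zero, coeff_add, coeff_sub,
    coeff_X_pow, coeff_C_mul, coeff_X, coeff_C]
  norm_num
  rw [neg_div, C_neg, neg_mul, ← sub_eq_add_neg]

theorem ffmulPow_two_quadratic (a : ℝ) (n : ℕ) :
    ffmulPow 2 (X ^ 2 - C 2 * X + C a) n = X ^ 2 - C 2 * X + C (a ^ n) := by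
  induction n with
  | zero =>
    rw [ffmulPow, pow_zero, C_1, show (C 2 : ℝ[X]) = 2 from rfl]
    ring
  | succ n ih =>
    rw [ffmulPow, ih, ffmul_two_quadratic, ← pow_succ']
    norm_num

theorem log_rpow_one_div_pow_mul {c x : ℝ} (hc : 0 < c) (hx : 0 < x) {n : ℕ} (hn : n ≠ 0) :
    Real.log ((c ^ n * x) ^ (1 / (n : ℝ))) = Real.log c + Real.log x / n := by
  rw [Real.log_rpow (by positivity), Real.log_mul (by positivity) hx.ne', Real.log_pow]
  field_simp

section
variable {c L : ℝ} {u : ℕ → ℝ}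

theorem tendsto_mul_log_rpow_one_div_pow_mul_sub_log (hc : 0 < c) (hL : 0 < L)
    (hu : Tendsto u atTop (𝓝 L)) :
    Tendsto (fun n : ℕ => (n : ℝ) * (Real.log ((c ^ n * u n) ^ (1 / (n : ℝ))) - Real.log c))
      atTop (𝓝 (Real.log L)) := by
  refine ((Real.continuousAt_log hL.ne').tendsto.comp hu).congr' ?_
  filter_upwards [hu.eventually (lt_mem_nhds hL), eventually_ne_atTop 0] with n hun hn
  rw [Function.comp_apply, log_rpow_one_div_pow_mul hc hun hn]
  field_simp
  ring

theorem tendsto_rpow_one_div_pow_mul (hc : 0 < c) (hL : 0 < L)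
    (hu : Tendsto u atTop (𝓝 L)) :
    Tendsto (fun n : ℕ => (c ^ n * u n) ^ (1 / (n : ℝ))) atTop (𝓝 c) := by
  have hlog : Tendsto (fun n : ℕ => Real.log c + Real.log (u n) / n) atTop (𝓝 (Real.log c)) := by
    simpa using tendsto_const_nhds.add
      (((Real.continuousAt_log hL.ne').tendsto.comp hu).div_atTop tendsto_natCast_atTop_atTop)
  refine (Real.exp_log hc ▸ (Real.continuous_exp.tendsto _).comp hlog).congr' ?_
  filter_upwards [hu.eventually (lt_mem_nhds hL), eventually_ne_atTop 0] with n hun hn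
  rw [Function.comp_apply, ← log_rpow_one_div_pow_mul hc hun hn, Real.exp_log (by positivity)]

end

theorem X_sq_sub_add_eq_mul (a b : ℝ) :
    X ^ 2 - C (a + b) * X + C (a * b) = (X - C a) * (X - C b) := by
  simp only [C_add, C_mul]
  ring

theorem one_add_sqrt_mul_one_sub_sqrt {r : ℝ} (hr : r ≤ 1) :
    (1 + √(1 - r)) * (1 - √(1 - r)) = r := by
  nlinarith [Real.sq_sqrt (sub_nonneg.mpr hr)]

/-- optimality of the `1/n` rate for `p(x) = x² − 2x + 1/2`:
`p^{⊠_2 n}(x) = x² − 2x + 2^{−n}` with roots `1 ± √(1 − 2^{−n})`,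
`(λ_1^(n))^{1/n} → 1`, `(λ_2^(n))^{1/n} → 1/2`, and
`n(log((λ_1^(n))^{1/n}) − log 1) → log 2`, `n(log((λ_2^(n))^{1/n}) − log(1/2)) → −log 2`. -/
theorem rate_optimal (p : Polynomial ℝ)
    (hp : p = Polynomial.X ^ 2 - Polynomial.C 2 * Polynomial.X + Polynomial.C (1 / 2))
    (lam1 lam2 : ℕ → ℝ)
    (h1 : ∀ n : ℕ, lam1 n = 1 + Real.sqrt (1 - 1 / 2 ^ n))
    (h2 : ∀ n : ℕ, lam2 n = 1 - Real.sqrt (1 - 1 / 2 ^ n)) :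
    (∀ n : ℕ, 1 ≤ n → ffmulPow 2 p n
        = Polynomial.X ^ 2 - Polynomial.C 2 * Polynomial.X + Polynomial.C ((1 : ℝ) / 2 ^ n)) ∧
    (∀ n : ℕ, 1 ≤ n → ffmulPow 2 p n
        = (Polynomial.X - Polynomial.C (lam1 n)) * (Polynomial.X - Polynomial.C (lam2 n))) ∧
    Filter.Tendsto (fun n : ℕ => (lam1 n) ^ (1 / (n : ℝ))) Filter.atTop (nhds 1) ∧
    Filter.Tendsto (fun n : ℕ => (lam2 n) ^ (1 / (n : ℝ))) Filter.atTop (nhds (1 / 2)) ∧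
    Filter.Tendsto
      (fun n : ℕ => (n : ℝ) * (Real.log ((lam1 n) ^ (1 / (n : ℝ))) - Real.log 1))
      Filter.atTop (nhds (Real.log 2)) ∧
    Filter.Tendsto
      (fun n : ℕ => (n : ℝ) * (Real.log ((lam2 n) ^ (1 / (n : ℝ))) - Real.log (1 / 2)))
      Filter.atTop (nhds (-Real.log 2)) := by
  subst hp
  have hpow : ∀ n, ffmulPow 2 (X ^ 2 - C 2 * X + C (1 / 2)) n
      = X ^ 2 - C 2 * X + C ((1 : ℝ) / 2 ^ n) := fun n => by
    rw [ffmulPow_two_quadratic, one_div_pow]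
  have hr : ∀ n : ℕ, (1 : ℝ) / 2 ^ n ≤ 1 := fun n =>
    div_le_one_of_le₀ (one_le_pow₀ one_le_two) (by positivity)
  have hlam1_pos : ∀ n, 0 < lam1 n := fun n => by
    rw [h1]; positivity
  have hlam2 : ∀ n, lam2 n = (1 / 2) ^ n * (lam1 n)⁻¹ := fun n => by
    rw [eq_mul_inv_iff_mul_eq₀ (hlam1_pos n).ne', one_div_pow, h1, h2, mul_comm,
      one_add_sqrt_mul_one_sub_sqrt (hr n)]
  have hlam1 : Tendsto lam1 atTop (𝓝 2) := by
    have hsqrt : Tendsto (fun n : ℕ => √(1 - 1 / 2 ^ n)) atTop (𝓝 1) := by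
      simpa using ((tendsto_pow_atTop_nhds_zero_of_lt_one (r := (1 : ℝ) / 2) (by norm_num)
        (by norm_num)).const_sub 1).sqrt
    exact (one_add_one_eq_two (R := ℝ) ▸ hsqrt.const_add 1).congr fun n => (h1 n).symm
  have hlam1_inv : Tendsto (fun n => (lam1 n)⁻¹) atTop (𝓝 (1 / 2)) := by
    simpa using hlam1.inv₀ two_ne_zero
  refine ⟨fun n _ => hpow n, fun n _ => ?_, ?_, ?_, ?_, ?_⟩
  · rw [hpow, ← X_sq_sub_add_eq_mul, h1, h2, one_add_sqrt_mul_one_sub_sqrt (hr n),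
      add_add_sub_cancel, one_add_one_eq_two]
  · simpa using tendsto_rpow_one_div_pow_mul one_pos two_pos hlam1
  · simpa only [hlam2] using tendsto_rpow_one_div_pow_mul one_half_pos one_half_pos hlam1_inv
  · simpa using tendsto_mul_log_rpow_one_div_pow_mul_sub_log one_pos two_pos hlam1
  · simpa [hlam2] using
      tendsto_mul_log_rpow_one_div_pow_mul_sub_log one_half_pos one_half_pos hlam1_inv
end

section
/- For each d ≥ 1, the probability measure (1/2)δ_0 + (1/(2d)) Σ_{i=1}^d δ_{(d−i+1)/(2d−i+1)} converges weakly, as d → ∞, to the probability measure (1/2)δ_0 + (1/(2(1−t)²))·1_{(0,1/2)}(t) dt on [0,∞); that is, for every bounded continuous function f on [0,∞), (1/2)f(0) + (1/(2d)) Σ_{i=1}^d f((d−i+1)/(2d−i+1)) → (1/2)f(0) + (1/2)∫_0^{1/2} f(u)/(1−u)² du. -/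
/-!
With `k = d - i` the atoms are `φ ((k + 1) / d)` for `φ p = p / (1 + p)`, so the non-atomic
part is a right Riemann sum of `f ∘ φ` on `[0, 1]`. Riemann sums of a continuous function
converge to its integral by dominated convergence applied to the step functions
`x ↦ g (⌈x n⌉ / n)`, and the substitution `p = u / (1 - u)` turns `∫₀¹ f (φ p) dp` into
`∫₀^{1/2} f u / (1 - u)² du`.
-/
open MeasureTheory Filter Set Topology

noncomputable def rightRiemannSum (g : ℝ → ℝ) (n : ℕ) : ℝ :=
  (∑ k ∈ Finset.range n, g ((k + 1) / n)) / n

lemma nat_ceil_mul_eq_of_mem_Ioc {n k : ℕ} {x : ℝ} (hn : n ≠ 0)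
    (hx : x ∈ Ioc (k / n : ℝ) ((k + 1) / n)) :
    ⌈x * n⌉₊ = k + 1 := by
  have hn' : (0 : ℝ) < n := by positivity
  rw [Nat.ceil_eq_iff k.succ_ne_zero, Nat.succ_sub_one, Nat.cast_succ]
  exact ⟨(div_lt_iff₀ hn').1 hx.1, (le_div_iff₀ hn').1 hx.2⟩

lemma nat_ceil_mul_div_mem_Icc {n : ℕ} {x : ℝ} (hx : x ∈ Icc (0 : ℝ) 1) :
    (⌈x * n⌉₊ / n : ℝ) ∈ Icc (0 : ℝ) 1 := by
  refine ⟨by positivity, div_le_one_of_le₀ ?_ n.cast_nonneg⟩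
  exact_mod_cast Nat.ceil_le.2 (mul_le_of_le_one_left n.cast_nonneg hx.2)

lemma integral_comp_nat_ceil_mul_div (g : ℝ → ℝ) {n : ℕ} (hn : n ≠ 0) :
    ∫ x in (0 : ℝ)..1, g (⌈x * n⌉₊ / n) = rightRiemannSum g n := by
  have hn' : (0 : ℝ) < n := by positivity
  have hstep : ∀ k : ℕ, EqOn (fun x : ℝ => g (⌈x * n⌉₊ / n)) (fun _ => g ((k + 1) / n))
      (uIoc (k / n : ℝ) ((k + 1 : ℕ) / n)) := by
    intro k x hx
    rw [uIoc_of_le (by gcongr; exact_mod_cast k.le_succ)] at hx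
    simp only [nat_ceil_mul_eq_of_mem_Ioc hn (by simpa using hx), Nat.cast_succ]
  have hpiece : ∀ k : ℕ, ∫ x in (k / n : ℝ)..((k + 1 : ℕ) / n), g (⌈x * n⌉₊ / n)
      = g ((k + 1) / n) / n := by
    intro k
    rw [intervalIntegral.integral_congr_ae (ae_of_all _ fun x hx => hstep k hx),
      intervalIntegral.integral_const, smul_eq_mul, Nat.cast_succ, ← sub_div]
    ring
  have hsum := intervalIntegral.sum_integral_adjacent_intervals (μ := volume)
    (f := fun x : ℝ => g (⌈x * n⌉₊ / n)) (a := fun k : ℕ => (k / n : ℝ)) (n := n)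
    fun k _ => (intervalIntegrable_const.congr (hstep k).symm)
  simp only [Nat.cast_zero, zero_div, div_self hn'.ne', hpiece] at hsum
  rw [← hsum, rightRiemannSum, Finset.sum_div]

theorem Continuous.tendsto_rightRiemannSum {g : ℝ → ℝ} (hg : Continuous g) :
    Tendsto (rightRiemannSum g) atTop (𝓝 (∫ x in (0 : ℝ)..1, g x)) := by
  obtain ⟨C, hC⟩ := (isCompact_Icc (a := (0 : ℝ)) (b := 1)).exists_bound_of_continuousOn
    hg.continuousOn
  have hIcc : ∀ x ∈ uIoc (0 : ℝ) 1, x ∈ Icc (0 : ℝ) 1 := fun x hx =>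
    Ioc_subset_Icc_self (by rwa [uIoc_of_le zero_le_one] at hx)
  have hlim := intervalIntegral.tendsto_integral_filter_of_dominated_convergence (μ := volume)
    (l := atTop) (F := fun (n : ℕ) (x : ℝ) => g (⌈x * n⌉₊ / n)) (f := g) (a := 0) (b := 1)
    (fun _ => C)
    (Eventually.of_forall fun n => (hg.measurable.comp (by fun_prop)).aestronglyMeasurable)
    (Eventually.of_forall fun n => ae_of_all _ fun x hx =>
      hC _ (nat_ceil_mul_div_mem_Icc (hIcc x hx)))
    intervalIntegrable_const
    (ae_of_all _ fun x hx => (hg.tendsto x).comp <|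
      (tendsto_nat_ceil_mul_div_atTop (hIcc x hx).1).comp tendsto_natCast_atTop_atTop)
  refine hlim.congr' ?_
  filter_upwards [eventually_ne_atTop 0] with n hn
  exact integral_comp_nat_ceil_mul_div g hn

theorem ContinuousOn.tendsto_rightRiemannSum {g : ℝ → ℝ} (hg : ContinuousOn g (Icc 0 1)) :
    Tendsto (rightRiemannSum g) atTop (𝓝 (∫ x in (0 : ℝ)..1, g x)) := by
  set G := IccExtend zero_le_one ((Icc (0 : ℝ) 1).domRestrict g)
  have hGg : EqOn G g (Icc 0 1) := fun x hx => IccExtend_of_mem _ _ hx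
  have hsum : rightRiemannSum G = rightRiemannSum g := by
    funext n
    refine congrArg (· / _) (Finset.sum_congr rfl fun k hk => hGg ⟨by positivity, ?_⟩)
    exact div_le_one_of_le₀ (by exact_mod_cast Finset.mem_range.1 hk) n.cast_nonneg
  have hint : ∫ x in (0 : ℝ)..1, G x = ∫ x in (0 : ℝ)..1, g x :=
    intervalIntegral.integral_congr (by rwa [uIcc_of_le zero_le_one])
  rw [← hsum, ← hint]
  exact (continuous_IccExtend_iff.2 hg.domRestrict).tendsto_rightRiemannSum

lemma sum_Icc_comp_div_eq_sum_range (f : ℝ → ℝ) (d : ℕ) :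
    ∑ i ∈ Finset.Icc 1 d, f (((d : ℝ) - i + 1) / (2 * (d : ℝ) - i + 1))
      = ∑ k ∈ Finset.range d, f ((k + 1) / d / (1 + (k + 1) / d)) := by
  refine Finset.sum_nbij' (d - ·) (d - ·) ?_ ?_ ?_ ?_ ?_ <;>
    intro i hi <;> simp only [Finset.mem_Icc, Finset.mem_range] at hi ⊢
  · omega
  · omega
  · omega
  · omega
  · have hd : (d : ℝ) ≠ 0 := by exact_mod_cast (by omega : d ≠ 0)
    have hi' : (i : ℝ) ≤ d := by exact_mod_cast hi.2
    have hden : 2 * (d : ℝ) - i + 1 ≠ 0 := by linarith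
    rw [Nat.cast_sub hi.2]
    congr 1
    field_simp
    ring

lemma continuousOn_comp_div_one_add {f : ℝ → ℝ} (hf : Continuous f) :
    ContinuousOn (fun p : ℝ => f (p / (1 + p))) (Ici 0) :=
  hf.comp_continuousOn (continuousOn_id.div (continuousOn_const.add continuousOn_id)
    fun p hp => (by linarith [mem_Ici.1 hp] : (0 : ℝ) < 1 + p).ne')

lemma integral_comp_div_one_add (f : ℝ → ℝ) (hf : Continuous f) :
    ∫ p in (0 : ℝ)..1, f (p / (1 + p)) = ∫ u in Ioo (0 : ℝ) (1 / 2), f u / (1 - u) ^ 2 := by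
  have hpos : ∀ u ∈ uIcc (0 : ℝ) (1 / 2), 0 < 1 - u := fun u hu => by
    rw [uIcc_of_le (by norm_num)] at hu; linarith [hu.2]
  have hderiv : ∀ u ∈ uIcc (0 : ℝ) (1 / 2),
      HasDerivAt (fun u => u / (1 - u)) (1 / (1 - u) ^ 2) u := by
    intro u hu
    refine ((hasDerivAt_id' u).fun_div ((hasDerivAt_const u 1).fun_sub (hasDerivAt_id' u))
      (hpos u hu).ne').congr_deriv ?_
    ring
  have hcont : ContinuousOn (fun u : ℝ => 1 / (1 - u) ^ 2) (uIcc 0 (1 / 2)) :=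
    continuousOn_const.div (by fun_prop) fun u hu => (pow_pos (hpos u hu) 2).ne'
  have hcomp : ContinuousOn (fun p : ℝ => f (p / (1 + p)))
      ((fun u => u / (1 - u)) '' uIcc 0 (1 / 2)) := by
    refine (continuousOn_comp_div_one_add hf).mono ?_
    rintro _ ⟨u, hu, rfl⟩
    exact div_nonneg (by rw [uIcc_of_le (by norm_num)] at hu; exact hu.1) (hpos u hu).le
  calc ∫ p in (0 : ℝ)..1, f (p / (1 + p))
      = ∫ p in (0 : ℝ) / (1 - 0)..(1 / 2) / (1 - 1 / 2), f (p / (1 + p)) := by norm_num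
    _ = ∫ u in (0 : ℝ)..1 / 2, f (u / (1 - u) / (1 + u / (1 - u))) * (1 / (1 - u) ^ 2) :=
      (intervalIntegral.integral_comp_mul_deriv' hderiv hcont hcomp).symm
    _ = ∫ u in (0 : ℝ)..1 / 2, f u / (1 - u) ^ 2 := by
      refine intervalIntegral.integral_congr fun u hu => ?_
      have h1 := (hpos u hu).ne'
      have hu' : u / (1 - u) / (1 + u / (1 - u)) = u := by field_simp; ring
      rw [hu', mul_one_div]
    _ = ∫ u in Ioo (0 : ℝ) (1 / 2), f u / (1 - u) ^ 2 := by
      rw [intervalIntegral.integral_of_le (by norm_num), integral_Ioc_eq_integral_Ioo]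

/-- the measures `(1/2)δ_0 + (1/(2d)) Σ_{i=1}^d δ_{(d−i+1)/(2d−i+1)}`
converge weakly to `(1/2)δ_0 + (1/(2(1−t)²))·1_{(0,1/2)}(t) dt`: for every bounded
continuous `f` on `[0,∞)`,
`(1/2)f(0) + (1/(2d)) Σ f((d−i+1)/(2d−i+1)) → (1/2)f(0) + (1/2)∫_0^{1/2} f(u)/(1−u)² du`. -/
theorem empirical_tendsto_half_dirac :
    ∀ f : ℝ → ℝ, Continuous f → (∃ M, ∀ x, |f x| ≤ M) →
      Tendsto (fun d : ℕ =>
          (1 / 2 : ℝ) * f 0 + (1 / (2 * (d : ℝ))) *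
            ∑ i ∈ Finset.Icc 1 d, f (((d : ℝ) - i + 1) / (2 * (d : ℝ) - i + 1)))
        atTop
        (nhds ((1 / 2 : ℝ) * f 0 +
          (1 / 2 : ℝ) * ∫ u in Set.Ioo (0 : ℝ) (1 / 2), f u / (1 - u) ^ 2)) := by
  intro f hf _
  have hg : ContinuousOn (fun p : ℝ => f (p / (1 + p))) (Icc 0 1) :=
    (continuousOn_comp_div_one_add hf).mono Icc_subset_Ici_self
  have hlim := (hg.tendsto_rightRiemannSum.const_mul (1 / 2)).const_add ((1 / 2) * f 0)
  rw [integral_comp_div_one_add f hf] at hlim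
  refine hlim.congr fun d => ?_
  rw [rightRiemannSum, sum_Icc_comp_div_eq_sum_range]
  ring
end
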